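/- arXiv:2605.06020 — 4 statements merged into one kernel-verified Lean document; each statement's English description precedes it below -/
import Mathlib

section
/- Under the assumptions of the preceding supremum-equality result, if the supremum of θ over X is attained at x*, then there exists ε* > 0 such that for every ε ∈ (0, ε*], the point x* is a global maximizer of θ^ε over X^ε. -/
open Filter Topology

/-- Open Heaviside: indicator of `(a, ∞)`. -/
noncomputable def openHeaviside (a t : ℝ) : ℝ := if a < t then 1 else 0

/-- Closed Heaviside: indicator of `[0, ∞)`. -/
noncomputable def closedHeaviside (t : ℝ) : ℝ := if 0 ≤ t then 1 else 0

/-- A-HSCOP objective. -/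
noncomputable def thetaAHS {n J0 : ℕ} (c : (Fin n → ℝ) → ℝ) (ψ0 : Fin J0 → ℝ)
    (φ0 : Fin J0 → (Fin n → ℝ) → ℝ) (x : Fin n → ℝ) : ℝ :=
  c x + ∑ j, ψ0 j * closedHeaviside (φ0 j x)

/-- ε-approximated objective. -/
noncomputable def thetaAHSEps {n J0 : ℕ} (c : (Fin n → ℝ) → ℝ) (ψ0 : Fin J0 → ℝ)
    (φ0 : Fin J0 → (Fin n → ℝ) → ℝ) (ε : ℝ) (x : Fin n → ℝ) : ℝ :=
  c x + ∑ j, max (ψ0 j) 0 * closedHeaviside (φ0 j x)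
      - ∑ j, max (-ψ0 j) 0 * openHeaviside (-ε) (φ0 j x)

/-- Feasible set of the A-HSCOP. -/
def Xahs {n I : ℕ} (P : Set (Fin n → ℝ)) (A : Fin I → Fin n → ℝ) (η : Fin I → ℝ)
    (J : Fin I → ℕ) (ψ : (i : Fin I) → Fin (J i) → ℝ)
    (φ : (i : Fin I) → Fin (J i) → (Fin n → ℝ) → ℝ) : Set (Fin n → ℝ) :=
  {x ∈ P | ∀ i : Fin I,
    (∑ k, A i k * x k) + ∑ j, ψ i j * closedHeaviside (φ i j x) ≥ η i}

/-- The ε-approximated feasible set. -/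
noncomputable def XahsEps {n I : ℕ} (P : Set (Fin n → ℝ)) (A : Fin I → Fin n → ℝ)
    (η : Fin I → ℝ) (J : Fin I → ℕ) (ψ : (i : Fin I) → Fin (J i) → ℝ)
    (φ : (i : Fin I) → Fin (J i) → (Fin n → ℝ) → ℝ) (ε : ℝ) : Set (Fin n → ℝ) :=
  {x ∈ P | ∀ i : Fin I,
    (∑ k, A i k * x k)
      + ∑ j, max (ψ i j) 0 * closedHeaviside (φ i j x)
      - ∑ j, max (-ψ i j) 0 * openHeaviside (-ε) (φ i j x) ≥ η i}

lemma heps_eq (t ε : ℝ) (hε : 0 < ε) (h : t < 0 → ε ≤ -t) :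
    openHeaviside (-ε) t = closedHeaviside t := by
  unfold openHeaviside closedHeaviside
  rcases le_or_gt 0 t with h0 | h0
  · rw [if_pos h0, if_pos (by linarith)]
  · rw [if_neg (not_le.2 h0), if_neg (by push_neg; linarith [h h0])]

lemma heps_ge (t ε : ℝ) (hε : 0 < ε) : closedHeaviside t ≤ openHeaviside (-ε) t := by
  unfold openHeaviside closedHeaviside
  rcases le_or_gt 0 t with h0 | h0
  · rw [if_pos h0, if_pos (by linarith)]
  · rw [if_neg (not_le.2 h0)]; positivity

lemma sum_split {m : ℕ} (ψ : Fin m → ℝ) (h : Fin m → ℝ) :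
    ∑ j, ψ j * h j = ∑ j, max (ψ j) 0 * h j - ∑ j, max (-ψ j) 0 * h j := by
  rw [← Finset.sum_sub_distrib]
  refine Finset.sum_congr rfl fun j _ => ?_
  rw [← sub_mul]
  congr 1
  rcases le_total (ψ j) 0 with hj | hj
  · simp [max_eq_right hj, max_eq_left (neg_nonneg.2 hj)]
  · simp [max_eq_left hj, max_eq_right (neg_nonpos.2 hj)]

theorem attained_sup_transfers {n I J0 : ℕ} (P : Set (Fin n → ℝ))
    (c : (Fin n → ℝ) → ℝ) (hc : Continuous c)
    (ψ0 : Fin J0 → ℝ) (φ0 : Fin J0 → (Fin n → ℝ) → ℝ) (hφ0 : ∀ j, Continuous (φ0 j))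
    (A : Fin I → Fin n → ℝ) (η : Fin I → ℝ) (J : Fin I → ℕ)
    (ψ : (i : Fin I) → Fin (J i) → ℝ)
    (φ : (i : Fin I) → Fin (J i) → (Fin n → ℝ) → ℝ) (hφ : ∀ i j, Continuous (φ i j))
    (xstar : Fin n → ℝ) (hx : xstar ∈ Xahs P A η J ψ φ)
    (hmax : ∀ x ∈ Xahs P A η J ψ φ, thetaAHS c ψ0 φ0 x ≤ thetaAHS c ψ0 φ0 xstar) :
    ∃ εstar > (0 : ℝ), ∀ ε : ℝ, 0 < ε → ε ≤ εstar →
      xstar ∈ XahsEps P A η J ψ φ ε ∧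
      ∀ x ∈ XahsEps P A η J ψ φ ε,
        thetaAHSEps c ψ0 φ0 ε x ≤ thetaAHSEps c ψ0 φ0 ε xstar := by
  classical
  set g : Fin J0 ⊕ ((i : Fin I) × Fin (J i)) → ℝ :=
    Sum.elim (fun j => φ0 j xstar) (fun p => φ p.1 p.2 xstar) with hg
  set S : Finset ℝ :=
    insert 1 (Finset.univ.image fun s => if g s < 0 then -(g s) else 1) with hS
  have hSne : S.Nonempty := ⟨1, Finset.mem_insert_self _ _⟩
  set εstar : ℝ := S.min' hSne with hεs
  have hSpos : ∀ v ∈ S, 0 < v := by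
    intro v hv
    rcases Finset.mem_insert.1 hv with h | h
    · rw [h]; norm_num
    · obtain ⟨s, -, rfl⟩ := Finset.mem_image.1 h
      split <;> [linarith; norm_num]
  have hεpos : 0 < εstar := hSpos _ (S.min'_mem hSne)
  have hkey : ∀ s, g s < 0 → εstar ≤ -(g s) := by
    intro s hs
    have hmem : (if g s < 0 then -(g s) else 1) ∈ S :=
      Finset.mem_insert_of_mem (Finset.mem_image_of_mem _ (Finset.mem_univ s))
    have h := S.min'_le _ hmem
    simpa [if_pos hs] using h
  refine ⟨εstar, hεpos, fun ε hε0 hεle => ?_⟩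
  have key : ∀ s, openHeaviside (-ε) (g s) = closedHeaviside (g s) := fun s =>
    heps_eq _ _ hε0 (fun h => hεle.trans (hkey s h))
  have key0 : ∀ j : Fin J0,
      openHeaviside (-ε) (φ0 j xstar) = closedHeaviside (φ0 j xstar) := fun j =>
    key (Sum.inl j)
  have keyI : ∀ (i : Fin I) (j : Fin (J i)),
      openHeaviside (-ε) (φ i j xstar) = closedHeaviside (φ i j xstar) := fun i j =>
    key (Sum.inr ⟨i, j⟩)
  -- membership of xstar in the ε-approximated feasible set
  have hmemEps : xstar ∈ XahsEps P A η J ψ φ ε := by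
    refine ⟨hx.1, fun i => ?_⟩
    have h1 : ∑ j, max (-ψ i j) 0 * openHeaviside (-ε) (φ i j xstar)
        = ∑ j, max (-ψ i j) 0 * closedHeaviside (φ i j xstar) :=
      Finset.sum_congr rfl fun j _ => by rw [keyI i j]
    have h2 := hx.2 i
    rw [sum_split (ψ i) (fun j => closedHeaviside (φ i j xstar))] at h2
    rw [h1]
    linarith
  -- ε-feasible points are feasible
  have hsub : ∀ x ∈ XahsEps P A η J ψ φ ε, x ∈ Xahs P A η J ψ φ := by
    intro x hx'
    refine ⟨hx'.1, fun i => ?_⟩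
    have h2 := hx'.2 i
    have hsum : ∑ j, max (-ψ i j) 0 * closedHeaviside (φ i j x)
        ≤ ∑ j, max (-ψ i j) 0 * openHeaviside (-ε) (φ i j x) :=
      Finset.sum_le_sum fun j _ =>
        mul_le_mul_of_nonneg_left (heps_ge _ _ hε0) (le_max_right _ _)
    rw [sum_split (ψ i) (fun j => closedHeaviside (φ i j x))]
    linarith
  -- the ε-objective is below the objective
  have hθle : ∀ x, thetaAHSEps c ψ0 φ0 ε x ≤ thetaAHS c ψ0 φ0 x := by
    intro x
    unfold thetaAHS thetaAHSEps
    have hsum : ∑ j, max (-ψ0 j) 0 * closedHeaviside (φ0 j x)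
        ≤ ∑ j, max (-ψ0 j) 0 * openHeaviside (-ε) (φ0 j x) :=
      Finset.sum_le_sum fun j _ =>
        mul_le_mul_of_nonneg_left (heps_ge _ _ hε0) (le_max_right _ _)
    rw [sum_split ψ0 (fun j => closedHeaviside (φ0 j x))]
    linarith
  -- equality at xstar
  have hθeq : thetaAHSEps c ψ0 φ0 ε xstar = thetaAHS c ψ0 φ0 xstar := by
    unfold thetaAHS thetaAHSEps
    have h1 : ∑ j, max (-ψ0 j) 0 * openHeaviside (-ε) (φ0 j xstar)
        = ∑ j, max (-ψ0 j) 0 * closedHeaviside (φ0 j xstar) :=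
      Finset.sum_congr rfl fun j _ => by rw [key0 j]
    rw [h1, sum_split ψ0 (fun j => closedHeaviside (φ0 j xstar))]
    ring
  refine ⟨hmemEps, fun x hx' => ?_⟩
  have := hmax x (hsub x hx')
  linarith [hθle x]
end

section
/- Local maximizers transfer from the approximation under local sign invariance: suppose x̄ is a local maximizer of the ε-approximated problem (maximize θ^ε over X^ε), that for every pair (i,j) with ψ_{ij} < 0 and φ_{ij}(x̄) = 0, the function φ_{ij} is nonnegative on some neighborhood of x̄, and that for all remaining pairs the Heaviside values 𝟙_{(−ε,∞)}(φ_{ij}(x)) and 𝟙_{[0,∞)}(φ_{ij}(x)) agree with 𝟙_{[0,∞)}(φ_{ij}(x̄)) near x̄. Then x̄ is a local maximizer of the A-HSCOP (maximize θ over X); in particular X ∩ N = X^ε ∩ N for some neighborhood N of x̄. -/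
open Filter Topology

lemma open_eq_closed_of_nonneg {ε t : ℝ} (hε : 0 < ε) (ht : 0 ≤ t) :
    openHeaviside (-ε) t = closedHeaviside t := by
  have : (-ε : ℝ) < t := lt_of_lt_of_le (neg_neg_of_pos hε) ht
  simp [openHeaviside, closedHeaviside, this, ht]

lemma sum_eps_eq {m : ℕ} (ψ : Fin m → ℝ) (φv : Fin m → ℝ) (ε : ℝ)
    (h : ∀ j, openHeaviside (-ε) (φv j) = closedHeaviside (φv j)) :
    ∑ j, max (ψ j) 0 * closedHeaviside (φv j)
      - ∑ j, max (-ψ j) 0 * openHeaviside (-ε) (φv j)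
      = ∑ j, ψ j * closedHeaviside (φv j) := by
  rw [← Finset.sum_sub_distrib]
  refine Finset.sum_congr rfl fun j _ => ?_
  rw [h j, ← sub_mul, max_zero_sub_max_neg_zero_eq_self]

open Filter Topology in
theorem local_max_transfers_from_approximation {n I J0 : ℕ} (P : Set (Fin n → ℝ))
    (c : (Fin n → ℝ) → ℝ)
    (ψ0 : Fin J0 → ℝ) (φ0 : Fin J0 → (Fin n → ℝ) → ℝ)
    (A : Fin I → Fin n → ℝ) (η : Fin I → ℝ) (J : Fin I → ℕ)
    (ψ : (i : Fin I) → Fin (J i) → ℝ)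
    (φ : (i : Fin I) → Fin (J i) → (Fin n → ℝ) → ℝ)
    (ε : ℝ) (hε : 0 < ε) (xbar : Fin n → ℝ)
    (hloc : IsLocalMaxOn (thetaAHSEps c ψ0 φ0 ε) (XahsEps P A η J ψ φ ε) xbar)
    -- local sign-invariance (LSI) condition at x̄
    (hLSI0 : ∀ j : Fin J0, ψ0 j < 0 → φ0 j xbar = 0 →
      ∀ᶠ x in 𝓝 xbar, 0 ≤ φ0 j x)
    (hLSI : ∀ (i : Fin I) (j : Fin (J i)), ψ i j < 0 → φ i j xbar = 0 →
      ∀ᶠ x in 𝓝 xbar, 0 ≤ φ i j x)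
    -- Heaviside values agree near x̄ for all remaining pairs
    (hsign0 : ∀ j : Fin J0, ¬(ψ0 j < 0 ∧ φ0 j xbar = 0) →
      ∀ᶠ x in 𝓝 xbar, openHeaviside (-ε) (φ0 j x) = closedHeaviside (φ0 j x) ∧
        closedHeaviside (φ0 j x) = closedHeaviside (φ0 j xbar))
    (hsign : ∀ (i : Fin I) (j : Fin (J i)), ¬(ψ i j < 0 ∧ φ i j xbar = 0) →
      ∀ᶠ x in 𝓝 xbar, openHeaviside (-ε) (φ i j x) = closedHeaviside (φ i j x) ∧
        closedHeaviside (φ i j x) = closedHeaviside (φ i j xbar)) :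
    IsLocalMaxOn (thetaAHS c ψ0 φ0) (Xahs P A η J ψ φ) xbar ∧
    ∃ N ∈ 𝓝 xbar,
      Xahs P A η J ψ φ ∩ N = XahsEps P A η J ψ φ ε ∩ N := by
  have hall : ∀ᶠ x in 𝓝 xbar,
      (∀ j, openHeaviside (-ε) (φ0 j x) = closedHeaviside (φ0 j x)) ∧
      ∀ i j, openHeaviside (-ε) (φ i j x) = closedHeaviside (φ i j x) := by
    refine Eventually.and ?_ ?_
    · rw [eventually_all]; intro j
      by_cases h : ψ0 j < 0 ∧ φ0 j xbar = 0
      · exact (hLSI0 j h.1 h.2).mono fun x hx => open_eq_closed_of_nonneg hε hx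
      · exact (hsign0 j h).mono fun x hx => hx.1
    · rw [eventually_all]; intro i
      rw [eventually_all]; intro j
      by_cases h : ψ i j < 0 ∧ φ i j xbar = 0
      · exact (hLSI i j h.1 h.2).mono fun x hx => open_eq_closed_of_nonneg hε hx
      · exact (hsign i j h).mono fun x hx => hx.1
  obtain ⟨N, hN, hNprop⟩ := hall.exists_mem
  have hxbarN : xbar ∈ N := mem_of_mem_nhds hN
  have hsets : Xahs P A η J ψ φ ∩ N = XahsEps P A η J ψ φ ε ∩ N := by
    ext x
    simp only [Set.mem_inter_iff, Xahs, XahsEps, Set.mem_setOf_eq]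
    constructor
    · rintro ⟨⟨hP, hC⟩, hxN⟩
      refine ⟨⟨hP, fun i => ?_⟩, hxN⟩
      have e := sum_eps_eq (ψ i) (fun j => φ i j x) ε (fun j => (hNprop x hxN).2 i j)
      have := hC i
      linarith
    · rintro ⟨⟨hP, hC⟩, hxN⟩
      refine ⟨⟨hP, fun i => ?_⟩, hxN⟩
      have e := sum_eps_eq (ψ i) (fun j => φ i j x) ε (fun j => (hNprop x hxN).2 i j)
      have := hC i
      linarith
  have hθ : ∀ x ∈ N, thetaAHSEps c ψ0 φ0 ε x = thetaAHS c ψ0 φ0 x := by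
    intro x hx
    have e := sum_eps_eq ψ0 (fun j => φ0 j x) ε (fun j => (hNprop x hx).1 j)
    simp only [thetaAHSEps, thetaAHS]
    linarith
  have h1 : ∀ᶠ x in 𝓝 xbar, x ∈ XahsEps P A η J ψ φ ε →
      thetaAHSEps c ψ0 φ0 ε x ≤ thetaAHSEps c ψ0 φ0 ε xbar :=
    eventually_nhdsWithin_iff.mp hloc
  have hNe : ∀ᶠ x in 𝓝 xbar, x ∈ N := eventually_of_mem hN fun x hx => hx
  constructor
  · refine eventually_nhdsWithin_iff.mpr ?_
    filter_upwards [h1, hNe] with x hx1 hxN hxX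
    have hxE : x ∈ XahsEps P A η J ψ φ ε := by
      have : x ∈ XahsEps P A η J ψ φ ε ∩ N := hsets ▸ Set.mem_inter hxX hxN
      exact this.1
    calc thetaAHS c ψ0 φ0 x = thetaAHSEps c ψ0 φ0 ε x := (hθ x hxN).symm
      _ ≤ thetaAHSEps c ψ0 φ0 ε xbar := hx1 hxE
      _ = thetaAHS c ψ0 φ0 xbar := hθ xbar hxbarN
  · exact ⟨N, hN, hsets⟩
end

section
/- The union of the decomposed feasible sets recovers the approximated feasible set: with X^{ε;k,ℓ} denoting the feasible set of the decomposed ε-approximating problem for an index tuple (k,ℓ), one has X^ε = ⋃_{(k,ℓ)} X^{ε;k,ℓ}, where the union runs over all tuples (k,ℓ) with k_{ij} ∈ {1,…,K_{ij}} and ℓ_{ij} ∈ {1,…,L_{ij}}. -/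
/-- Pointwise maximum of `K` affine functions. -/
noncomputable def pwMax {n : ℕ} (K : ℕ) (hK : 0 < K) (a : Fin K → Fin n → ℝ)
    (α : Fin K → ℝ) (x : Fin n → ℝ) : ℝ :=
  Finset.univ.sup' (Finset.univ_nonempty_iff.mpr ⟨⟨0, hK⟩⟩)
    fun k => (∑ m, a k m * x m) + α k

/-- Pointwise minimum of `L` affine functions. -/
noncomputable def pwMin {n : ℕ} (L : ℕ) (hL : 0 < L) (b : Fin L → Fin n → ℝ)
    (β : Fin L → ℝ) (x : Fin n → ℝ) : ℝ :=
  Finset.univ.inf' (Finset.univ_nonempty_iff.mpr ⟨⟨0, hL⟩⟩)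
    fun l => (∑ m, b l m * x m) + β l


lemma closedHeaviside_mono : Monotone closedHeaviside := by
  intro s t h
  unfold closedHeaviside
  split_ifs <;> norm_num <;> linarith

lemma openHeaviside_mono (a : ℝ) : Monotone (openHeaviside a) := by
  intro s t h
  unfold openHeaviside
  split_ifs <;> norm_num <;> linarith

theorem decomposed_feasible_union {n I : ℕ} (P : Set (Fin n → ℝ))
    (A : Fin I → Fin n → ℝ) (η : Fin I → ℝ) (J : Fin I → ℕ)
    (ψ : (i : Fin I) → Fin (J i) → ℝ)
    (K L : (i : Fin I) → Fin (J i) → ℕ)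
    (hK : ∀ i j, 0 < K i j) (hL : ∀ i j, 0 < L i j)
    (a : (i : Fin I) → (j : Fin (J i)) → Fin (K i j) → Fin n → ℝ)
    (α : (i : Fin I) → (j : Fin (J i)) → Fin (K i j) → ℝ)
    (b : (i : Fin I) → (j : Fin (J i)) → Fin (L i j) → Fin n → ℝ)
    (β : (i : Fin I) → (j : Fin (J i)) → Fin (L i j) → ℝ)
    (ε : ℝ) (hε : 0 < ε) :
    -- the ε-approximated feasible set
    {x ∈ P | ∀ i : Fin I,
      (∑ m, A i m * x m)
        + ∑ j, max (ψ i j) 0 * closedHeaviside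
            (pwMax (K i j) (hK i j) (a i j) (α i j) x
              + pwMin (L i j) (hL i j) (b i j) (β i j) x)
        - ∑ j, max (-ψ i j) 0 * openHeaviside (-ε)
            (pwMax (K i j) (hK i j) (a i j) (α i j) x
              + pwMin (L i j) (hL i j) (b i j) (β i j) x) ≥ η i}
    = ⋃ (k : (i : Fin I) → (j : Fin (J i)) → Fin (K i j))
        (l : (i : Fin I) → (j : Fin (J i)) → Fin (L i j)),
        -- the decomposed ε-approximated feasible set for the tuple (k, l)
        {x ∈ P | ∀ i : Fin I,
          (∑ m, A i m * x m)
            + ∑ j, max (ψ i j) 0 * closedHeaviside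
                (((∑ m, a i j (k i j) m * x m) + α i j (k i j))
                  + pwMin (L i j) (hL i j) (b i j) (β i j) x)
            - ∑ j, max (-ψ i j) 0 * openHeaviside (-ε)
                (pwMax (K i j) (hK i j) (a i j) (α i j) x
                  + ((∑ m, b i j (l i j) m * x m) + β i j (l i j))) ≥ η i} := by
  ext x
  simp only [Set.mem_setOf_eq, Set.mem_iUnion]
  constructor
  · rintro ⟨hxP, hx⟩
    have hk : ∀ i j, ∃ k, pwMax (K i j) (hK i j) (a i j) (α i j) x
        = (∑ m, a i j k m * x m) + α i j k := by
      intro i j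
      obtain ⟨k, -, hk⟩ := Finset.exists_mem_eq_sup'
        (Finset.univ_nonempty_iff.mpr ⟨⟨0, hK i j⟩⟩)
        (fun k => (∑ m, a i j k m * x m) + α i j k)
      exact ⟨k, hk⟩
    have hl : ∀ i j, ∃ l, pwMin (L i j) (hL i j) (b i j) (β i j) x
        = (∑ m, b i j l m * x m) + β i j l := by
      intro i j
      obtain ⟨l, -, hl⟩ := Finset.exists_mem_eq_inf'
        (Finset.univ_nonempty_iff.mpr ⟨⟨0, hL i j⟩⟩)
        (fun l => (∑ m, b i j l m * x m) + β i j l)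
      exact ⟨l, hl⟩
    choose k hk using hk
    choose l hl using hl
    refine ⟨k, l, hxP, fun i => ?_⟩
    simp only [← hk, ← hl]
    exact hx i
  · rintro ⟨k, l, hxP, hx⟩
    refine ⟨hxP, fun i => ?_⟩
    refine le_trans (hx i) ?_
    have h1 : ∀ j : Fin (J i),
        max (ψ i j) 0 * closedHeaviside
            (((∑ m, a i j (k i j) m * x m) + α i j (k i j))
              + pwMin (L i j) (hL i j) (b i j) (β i j) x)
          ≤ max (ψ i j) 0 * closedHeaviside
            (pwMax (K i j) (hK i j) (a i j) (α i j) x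
              + pwMin (L i j) (hL i j) (b i j) (β i j) x) := by
      intro j
      refine mul_le_mul_of_nonneg_left (closedHeaviside_mono ?_) (le_max_right _ _)
      have : (∑ m, a i j (k i j) m * x m) + α i j (k i j)
          ≤ pwMax (K i j) (hK i j) (a i j) (α i j) x :=
        Finset.le_sup' (fun k' => (∑ m, a i j k' m * x m) + α i j k') (Finset.mem_univ _)
      linarith
    have h2 : ∀ j : Fin (J i),
        max (-ψ i j) 0 * openHeaviside (-ε)
            (pwMax (K i j) (hK i j) (a i j) (α i j) x
              + pwMin (L i j) (hL i j) (b i j) (β i j) x)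
          ≤ max (-ψ i j) 0 * openHeaviside (-ε)
            (pwMax (K i j) (hK i j) (a i j) (α i j) x
              + ((∑ m, b i j (l i j) m * x m) + β i j (l i j))) := by
      intro j
      refine mul_le_mul_of_nonneg_left (openHeaviside_mono _ ?_) (le_max_right _ _)
      have : pwMin (L i j) (hL i j) (b i j) (β i j) x
          ≤ (∑ m, b i j (l i j) m * x m) + β i j (l i j) :=
        Finset.inf'_le (fun l' => (∑ m, b i j l' m * x m) + β i j l') (Finset.mem_univ _)
      linarith
    have s1 := Finset.sum_le_sum (s := Finset.univ) (fun j _ => h1 j)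
    have s2 := Finset.sum_le_sum (s := Finset.univ) (fun j _ => h2 j)
    linarith
end

section
/- Regularization does not change local maximizers even without semicontinuity: for any ρ > 0, a point x̄ ∈ X is a local maximizer of θ over X if and only if x̄ is a local maximizer of x ↦ θ(x) − (ρ/2)‖x − x̄‖₂² over X, provided X has the local star-shape property at x̄ and the hypograph of θ has the local star-shape property at (x̄, θ(x̄)). -/
open Topology

/-- Local star-shape property of a set `S` at a point `s̄ ∈ S`. -/
def LocallyStarShapedAt {E : Type*} [AddCommGroup E] [Module ℝ E] [TopologicalSpace E]
    (S : Set E) (sbar : E) : Prop :=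
  ∃ N ∈ 𝓝 sbar, ∀ s ∈ S ∩ N, ∃ τbar > (0 : ℝ), ∀ τ ∈ Set.Icc (0 : ℝ) τbar,
    sbar + τ • (s - sbar) ∈ S

/-!
If `θ x > θ x̄` for some `x` near `x̄`, the star shape of the hypograph yields a point
`(x, t)` with `θ x̄ < t ≤ θ x` whose segment to `(x̄, θ x̄)` stays in the hypograph, so `θ` grows
at least linearly, at slope `t - θ x̄ > 0`, along the ray from `x̄` towards `x`. A regularizer
with vanishing directional derivatives at `x̄`, such as `(ρ/2)‖· - x̄‖²`, grows sublinearly along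
that ray, so for small steps (which stay in `X` by its star shape) the regularized function
exceeds its value at `x̄`.
-/

open Filter Set

section LocallyStarShaped

variable {E : Type*} [AddCommGroup E] [Module ℝ E] [TopologicalSpace E]

theorem LocallyStarShapedAt.eventually_segment_mem {S : Set E} {s₀ : E}
    (h : LocallyStarShapedAt S s₀) :
    ∀ᶠ s in 𝓝 s₀, s ∈ S → ∀ᶠ τ in 𝓝[≥] (0 : ℝ), s₀ + τ • (s - s₀) ∈ S := by
  obtain ⟨N, hN, hstar⟩ := h
  filter_upwards [hN] with s hsN hs
  obtain ⟨τbar, hτbar, hseg⟩ := hstar s ⟨hs, hsN⟩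
  exact mem_of_superset (Icc_mem_nhdsGE hτbar) hseg

theorem LocallyStarShapedAt.eventually_linear_growth_of_hypograph {θ : E → ℝ} {x₀ : E}
    (h : LocallyStarShapedAt {p : E × ℝ | p.2 ≤ θ p.1} (x₀, θ x₀)) :
    ∀ᶠ x in 𝓝 x₀, θ x₀ < θ x →
      ∃ δ > 0, ∀ᶠ τ in 𝓝[≥] (0 : ℝ), θ x₀ + τ * δ ≤ θ (x₀ + τ • (x - x₀)) := by
  filter_upwards [h.eventually_segment_mem.curry_nhds] with x hx hlt
  have hlevel : ∀ᶠ t in 𝓝[>] θ x₀, θ x₀ < t ∧ t < θ x :=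
    (eventually_mem_nhdsWithin (s := Ioi _)).and
      ((eventually_lt_nhds hlt).filter_mono nhdsWithin_le_nhds)
  obtain ⟨t, ⟨ht, htθ⟩, hseg⟩ := (hlevel.and (hx.filter_mono nhdsWithin_le_nhds)).exists
  exact ⟨t - θ x₀, sub_pos.2 ht, hseg htθ.le⟩

variable [ContinuousAdd E] [ContinuousSMul ℝ E]

theorem isLocalMaxOn_of_isLocalMaxOn_sub {X : Set E} {θ g : E → ℝ} {x₀ : E}
    (hX : LocallyStarShapedAt X x₀) (hθ : LocallyStarShapedAt {p : E × ℝ | p.2 ≤ θ p.1} (x₀, θ x₀))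
    (hg : ∀ v, HasDerivWithinAt (fun τ : ℝ => g (x₀ + τ • v)) 0 (Ioi 0) 0)
    (h : IsLocalMaxOn (fun x => θ x - g x) X x₀) : IsLocalMaxOn θ X x₀ := by
  have hray : ∀ v : E, Tendsto (fun τ : ℝ => x₀ + τ • v) (𝓝[>] 0) (𝓝 x₀) := fun v =>
    ((continuous_const.add (continuous_id.smul continuous_const)).tendsto' 0 x₀
      (by simp)).mono_left nhdsWithin_le_nhds
  filter_upwards [self_mem_nhdsWithin, nhdsWithin_le_nhds hX.eventually_segment_mem,
    nhdsWithin_le_nhds hθ.eventually_linear_growth_of_hypograph] with x hxX hXseg hgrowth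
  by_contra! hlt
  obtain ⟨δ, hδ, hlin⟩ := hgrowth hlt
  have hGT_le_GE : 𝓝[>] (0 : ℝ) ≤ 𝓝[≥] 0 := nhdsWithin_mono _ Ioi_subset_Ici_self
  have hcontra : ∀ᶠ τ in 𝓝[>] (0 : ℝ), False := by
    filter_upwards [self_mem_nhdsWithin, (hXseg hxX).filter_mono hGT_le_GE,
      hlin.filter_mono hGT_le_GE, (hray _).eventually (eventually_nhdsWithin_iff.1 h),
      (hg (x - x₀)).limsup_slope_le' self_notMem_Ioi hδ] with τ hτ hmem hθτ hmax hslope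
    rw [slope_def_field, zero_smul, add_zero, sub_zero, div_lt_iff₀ hτ] at hslope
    linarith [hmax hmem]
  obtain ⟨_, hfalse⟩ := hcontra.exists
  exact hfalse

end LocallyStarShaped

theorem hasDerivAt_mul_norm_smul_sq {F : Type*} [SeminormedAddCommGroup F] [NormedSpace ℝ F]
    (c : ℝ) (v : F) : HasDerivAt (fun τ : ℝ => c * ‖τ • v‖ ^ 2) 0 0 := by
  have hquad : (fun τ : ℝ => c * ‖τ • v‖ ^ 2) = fun τ => c * ‖v‖ ^ 2 * τ ^ 2 := by
    funext τ
    rw [norm_smul, mul_pow, Real.norm_eq_abs, sq_abs]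
    ring
  rw [hquad]
  simpa using (hasDerivAt_pow 2 (0 : ℝ)).const_mul (c * ‖v‖ ^ 2)

theorem regularization_preserves_local_max_general {n : ℕ}
    (X : Set (EuclideanSpace ℝ (Fin n))) (θ : EuclideanSpace ℝ (Fin n) → ℝ)
    (xbar : EuclideanSpace ℝ (Fin n)) (ρ : ℝ) (hρ : 0 < ρ)
    (hXstar : LocallyStarShapedAt X xbar)
    (hhypo : LocallyStarShapedAt {p : EuclideanSpace ℝ (Fin n) × ℝ | p.2 ≤ θ p.1}
      (xbar, θ xbar)) :
    IsLocalMaxOn θ X xbar ↔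
      IsLocalMaxOn (fun x => θ x - ρ / 2 * ‖x - xbar‖ ^ 2) X xbar := by
  refine ⟨fun h => h.sub ?_, isLocalMaxOn_of_isLocalMaxOn_sub hXstar hhypo fun v => ?_⟩
  · refine Eventually.of_forall fun x => ?_
    show ρ / 2 * ‖xbar - xbar‖ ^ 2 ≤ ρ / 2 * ‖x - xbar‖ ^ 2
    rw [sub_self, norm_zero, sq, mul_zero, mul_zero]
    positivity
  · simpa using (hasDerivAt_mul_norm_smul_sq (ρ / 2) v).hasDerivWithinAt (s := Ioi 0)

theorem regularization_preserves_local_max {n : ℕ}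
    (X : Set (EuclideanSpace ℝ (Fin n))) (θ : EuclideanSpace ℝ (Fin n) → ℝ)
    (xbar : EuclideanSpace ℝ (Fin n)) (hx : xbar ∈ X) (ρ : ℝ) (hρ : 0 < ρ)
    (hXstar : LocallyStarShapedAt X xbar)
    (hhypo : LocallyStarShapedAt {p : EuclideanSpace ℝ (Fin n) × ℝ | p.2 ≤ θ p.1}
      (xbar, θ xbar)) :
    IsLocalMaxOn θ X xbar ↔
      IsLocalMaxOn (fun x => θ x - ρ / 2 * ‖x - xbar‖ ^ 2) X xbar :=
  regularization_preserves_local_max_general X θ xbar ρ hρ hXstar hhypo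
end
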